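/- arXiv:1707.06837 — 11 statements merged into one kernel-verified Lean document; each statement's English description precedes it below -/
import Mathlib

section
/- Let Y be a vector in ℝⁿ and b₀ a vector in ℝᵐ. Then the GLS estimator of the stacked time-varying-parameter regression satisfies the identity (Zᵀ H⁻¹ Z + C⁻ᵀ Q⁻¹ C⁻¹)⁻¹ (Zᵀ H⁻¹ Y + C⁻ᵀ Q⁻¹ b₀) = C b₀ + C Q Cᵀ Zᵀ Ω⁻¹ (Y − Z C b₀); that is, the GLS estimate of the stacked coefficient vector equals the Kalman-smoothed estimate (Proposition 1, estimate part). -/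
/-!
Write `P = C Q Cᵀ`, so that `C⁻ᵀ Q⁻¹ C⁻¹ = P⁻¹`, `G = Zᵀ H⁻¹ Z + P⁻¹` and `Ω = H + Z P Zᵀ`.
By the Woodbury identity the Kalman gain `P Zᵀ Ω⁻¹` equals `G⁻¹ Zᵀ H⁻¹`, and `G⁻¹ G = 1` gives
`G⁻¹ P⁻¹ = 1 - G⁻¹ Zᵀ H⁻¹ Z`; substituting both into the GLS estimate yields the smoothed one.
-/

open Matrix

namespace Matrix

section KalmanGain

variable {R : Type*} [CommRing R] {n m : Type*} [Fintype n] [Fintype m] [DecidableEq n]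
  [DecidableEq m] {H : Matrix n n R} {P : Matrix m m R} (Z : Matrix n m R) (W : Matrix m n R)

theorem kalman_gain_eq_information_gain (hH : IsUnit H) (hP : IsUnit P)
    (hG : IsUnit (W * H⁻¹ * Z + P⁻¹)) :
    P * W * (H + Z * P * W)⁻¹ = (W * H⁻¹ * Z + P⁻¹)⁻¹ * W * H⁻¹ := by
  rw [add_mul_mul_inv_eq_sub H Z P W hH hP (by rwa [add_comm]), add_comm P⁻¹]
  generalize hGdef : W * H⁻¹ * Z + P⁻¹ = G at hG ⊢
  have hPG : P * (G - W * H⁻¹ * Z) = 1 := by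
    rw [← hGdef, add_sub_cancel_left, mul_nonsing_inv _ ((isUnit_iff_isUnit_det _).mp hP)]
  calc P * W * (H⁻¹ - H⁻¹ * Z * G⁻¹ * W * H⁻¹)
      = P * (G - W * H⁻¹ * Z) * (G⁻¹ * W * H⁻¹) := by
        simp only [Matrix.mul_sub, Matrix.sub_mul, Matrix.mul_assoc,
          mul_nonsing_inv_cancel_left _ _ ((isUnit_iff_isUnit_det _).mp hG)]
    _ = G⁻¹ * W * H⁻¹ := by rw [hPG, Matrix.one_mul]

theorem information_mean_eq_kalman_mean (hH : IsUnit H) (hP : IsUnit P)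
    (hG : IsUnit (W * H⁻¹ * Z + P⁻¹)) (y : n → R) (μ : m → R) :
    (W * H⁻¹ * Z + P⁻¹)⁻¹ *ᵥ ((W * H⁻¹) *ᵥ y + P⁻¹ *ᵥ μ)
      = μ + (P * W * (H + Z * P * W)⁻¹) *ᵥ (y - Z *ᵥ μ) := by
  rw [kalman_gain_eq_information_gain Z W hH hP hG]
  generalize hGdef : W * H⁻¹ * Z + P⁻¹ = G at hG ⊢
  have hGP : G⁻¹ * P⁻¹ = 1 - G⁻¹ * W * H⁻¹ * Z := by
    rw [eq_sub_iff_add_eq, ← nonsing_inv_mul G ((isUnit_iff_isUnit_det _).mp hG), ← hGdef,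
      Matrix.mul_add, add_comm]
    simp only [Matrix.mul_assoc]
  rw [mulVec_add, mulVec_mulVec, mulVec_mulVec, hGP, mulVec_sub, sub_mulVec, mulVec_mulVec,
    one_mulVec, ← Matrix.mul_assoc]
  abel

end KalmanGain

theorem PosDef.mul_mul_transpose_of_isUnit {n : Type*} [Fintype n] [DecidableEq n]
    {Q C : Matrix n n ℝ} (hQ : Q.PosDef) (hC : IsUnit C) : (C * Q * Cᵀ).PosDef := by
  simpa [star_eq_conjTranspose, conjTranspose_eq_transpose_of_trivial] using
    hC.posDef_star_right_conjugate_iff.2 hQ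

end Matrix

/-- Proposition 1 (estimate part): the GLS estimator of the stacked
time-varying-parameter regression equals the Kalman-smoothed estimate. -/
theorem gls_equals_kalman_smoother_estimate
    (n m : ℕ)
    (H : Matrix (Fin n) (Fin n) ℝ) (Q : Matrix (Fin m) (Fin m) ℝ)
    (C : Matrix (Fin m) (Fin m) ℝ) (Z : Matrix (Fin n) (Fin m) ℝ)
    (hH : H.PosDef) (hQ : Q.PosDef) (hC : IsUnit C)
    (Ω : Matrix (Fin n) (Fin n) ℝ) (hΩ : Ω = H + Z * C * Q * Cᵀ * Zᵀ)
    (G : Matrix (Fin m) (Fin m) ℝ) (hG : G = Zᵀ * H⁻¹ * Z + C⁻¹ᵀ * Q⁻¹ * C⁻¹)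
    (Y : Fin n → ℝ) (b₀ : Fin m → ℝ) :
    G⁻¹ *ᵥ ((Zᵀ * H⁻¹) *ᵥ Y + (C⁻¹ᵀ * Q⁻¹) *ᵥ b₀)
      = C *ᵥ b₀ + (C * Q * Cᵀ * Zᵀ * Ω⁻¹) *ᵥ (Y - (Z * C) *ᵥ b₀) := by
  set P := C * Q * Cᵀ
  have hP : P.PosDef := hQ.mul_mul_transpose_of_isUnit hC
  have hPinv : P⁻¹ = C⁻¹ᵀ * Q⁻¹ * C⁻¹ := by
    rw [Matrix.mul_inv_rev, Matrix.mul_inv_rev, transpose_nonsing_inv, Matrix.mul_assoc]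
  have hGP : G = Zᵀ * H⁻¹ * Z + P⁻¹ := by rw [hG, hPinv]
  have hG_posDef : (Zᵀ * H⁻¹ * Z + P⁻¹).PosDef := by
    refine PosDef.posSemidef_add ?_ hP.inv
    simpa [conjTranspose_eq_transpose_of_trivial] using
      hH.inv.posSemidef.conjTranspose_mul_mul_same Z
  have hb₀ : (C⁻¹ᵀ * Q⁻¹) *ᵥ b₀ = P⁻¹ *ᵥ (C *ᵥ b₀) := by
    rw [hPinv, mulVec_mulVec, Matrix.mul_assoc,
      nonsing_inv_mul _ ((isUnit_iff_isUnit_det _).mp hC), Matrix.mul_one]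
  have hΩP : Ω = H + Z * P * Zᵀ := by simp only [hΩ, P, Matrix.mul_assoc]
  rw [hb₀, hGP, hΩP, ← mulVec_mulVec b₀ Z C,
    information_mean_eq_kalman_mean Z Zᵀ hH.isUnit hP.isUnit hG_posDef.isUnit]
end

section
/- The inverse of the GLS normal matrix equals the Kalman-smoother mean-squared-error matrix: (Zᵀ H⁻¹ Z + C⁻ᵀ Q⁻¹ C⁻¹)⁻¹ = C Q Cᵀ − C Q Cᵀ Zᵀ Ω⁻¹ Z C Q Cᵀ (Proposition 1, mean-squared-error part). -/
/-!
Write `P = C Q Cᵀ`. Since `P⁻¹ = C⁻ᵀ Q⁻¹ C⁻¹`, the normal matrix is `P⁻¹ + Zᵀ H⁻¹ Z`, and the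
Woodbury identity inverts it as `P - P Zᵀ (H + Z P Zᵀ)⁻¹ Z P`, where `H + Z P Zᵀ = Ω`. The only
hypothesis of Woodbury that is not immediate is the invertibility of `Ω`, which holds because it
is a positive definite matrix plus a positive semidefinite one.
-/

open Matrix

namespace Matrix

variable {ι κ 𝕜 : Type*} [Fintype ι] [Fintype κ]

theorem PosDef.add_mul_mul_transpose {H : Matrix κ κ ℝ} {Q : Matrix ι ι ℝ}
    (hH : H.PosDef) (hQ : Q.PosDef) (Z : Matrix κ ι ℝ) : (H + Z * Q * Zᵀ).PosDef :=
  hH.add_posSemidef (hQ.posSemidef.mul_mul_conjTranspose_same Z)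

variable [DecidableEq ι] [DecidableEq κ]

theorem inv_mul_mul_transpose [CommRing 𝕜] (C Q : Matrix ι ι 𝕜) :
    (C * Q * Cᵀ)⁻¹ = C⁻¹ᵀ * Q⁻¹ * C⁻¹ := by
  rw [mul_inv_rev, mul_inv_rev, transpose_nonsing_inv, Matrix.mul_assoc]

theorem inv_add_mul_inv_mul_eq_sub [Field 𝕜] (P : Matrix ι ι 𝕜) (H : Matrix κ κ 𝕜)
    (U : Matrix κ ι 𝕜) (V : Matrix ι κ 𝕜) (hP : IsUnit P) (hH : IsUnit H)
    (hHP : IsUnit (H + U * P * V)) :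
    (P⁻¹ + V * H⁻¹ * U)⁻¹ = P - P * V * (H + U * P * V)⁻¹ * U * P := by
  have hP_inv : P⁻¹⁻¹ = P := nonsing_inv_nonsing_inv P ((isUnit_iff_isUnit_det P).mp hP)
  have hH_inv : H⁻¹⁻¹ = H := nonsing_inv_nonsing_inv H ((isUnit_iff_isUnit_det H).mp hH)
  have woodbury := add_mul_mul_inv_eq_sub P⁻¹ V H⁻¹ U (isUnit_nonsing_inv_iff.mpr hP)
    (isUnit_nonsing_inv_iff.mpr hH) (by rwa [hH_inv, hP_inv])
  rwa [hH_inv, hP_inv] at woodbury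

end Matrix

/-- Proposition 1 (MSE part): the inverse of the GLS normal matrix equals the
Kalman-smoother mean-squared-error matrix. -/
theorem gls_normal_matrix_inverse_eq_kalman_mse
    (n m : ℕ)
    (H : Matrix (Fin n) (Fin n) ℝ) (Q : Matrix (Fin m) (Fin m) ℝ)
    (C : Matrix (Fin m) (Fin m) ℝ) (Z : Matrix (Fin n) (Fin m) ℝ)
    (hH : H.PosDef) (hQ : Q.PosDef) (hC : IsUnit C)
    (Ω : Matrix (Fin n) (Fin n) ℝ) (hΩ : Ω = H + Z * C * Q * Cᵀ * Zᵀ)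
    (G : Matrix (Fin m) (Fin m) ℝ) (hG : G = Zᵀ * H⁻¹ * Z + C⁻¹ᵀ * Q⁻¹ * C⁻¹) :
    G⁻¹ = C * Q * Cᵀ - C * Q * Cᵀ * Zᵀ * Ω⁻¹ * Z * C * Q * Cᵀ := by
  set P := C * Q * Cᵀ with hP_def
  have hG' : G = P⁻¹ + Zᵀ * H⁻¹ * Z := by rw [hG, inv_mul_mul_transpose, add_comm]
  have hΩP : Ω = H + Z * P * Zᵀ := by simp only [hΩ, hP_def, Matrix.mul_assoc]
  have hΩ_pos : Ω.PosDef := by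
    have hZC : Z * C * Q * Cᵀ * Zᵀ = Z * C * Q * (Z * C)ᵀ := by
      simp only [transpose_mul, Matrix.mul_assoc]
    rw [hΩ, hZC]
    exact hH.add_mul_mul_transpose hQ (Z * C)
  have hP : IsUnit P := (hC.mul hQ.isUnit).mul (isUnit_transpose C |>.mpr hC)
  rw [hG', inv_add_mul_inv_mul_eq_sub P H Z Zᵀ hP hH.isUnit (hΩP ▸ hΩ_pos.isUnit), ← hΩP]
  simp only [hP_def, Matrix.mul_assoc]
end

section
/- The Schur complement of the block normal matrix satisfies F := Jᵀ H⁻¹ J − (Jᵀ H⁻¹ Z) G⁻¹ (Zᵀ H⁻¹ J) = Jᵀ Ω⁻¹ J; consequently F is invertible with F⁻¹ = (Jᵀ Ω⁻¹ J)⁻¹ whenever Jᵀ Ω⁻¹ J is invertible. -/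
/-!
Ω = H + Z (C Q Cᵀ) Zᵀ is a low-rank update of H, and (C Q Cᵀ)⁻¹ + Zᵀ H⁻¹ Z is exactly G, which is
positive definite and hence invertible. The Woodbury identity therefore gives
Ω⁻¹ = H⁻¹ − H⁻¹ Z G⁻¹ Zᵀ H⁻¹, and sandwiching it between Jᵀ and J yields F.
-/

open Matrix

variable {m n : Type*} [Fintype m] [Fintype n] [DecidableEq m] [DecidableEq n]

lemma Matrix.PosDef.transpose_mul_mul_of_isUnit {Q B : Matrix m m ℝ} (hQ : Q.PosDef)
    (hB : IsUnit B) : (Bᵀ * Q * B).PosDef := by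
  simpa using hQ.conjTranspose_mul_mul_same (mulVec_injective_iff_isUnit.mpr hB)

lemma Matrix.posDef_transpose_mul_inv_mul_add {H : Matrix n n ℝ} {Q C : Matrix m m ℝ}
    (Z : Matrix n m ℝ) (hH : H.PosDef) (hQ : Q.PosDef) (hC : IsUnit C) :
    (Zᵀ * H⁻¹ * Z + C⁻¹ᵀ * Q⁻¹ * C⁻¹).PosDef := by
  have hZ : (Zᵀ * H⁻¹ * Z).PosSemidef := by
    simpa using hH.inv.posSemidef.conjTranspose_mul_mul_same Z
  have hQC : (C⁻¹ᵀ * Q⁻¹ * C⁻¹).PosDef :=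
    hQ.inv.transpose_mul_mul_of_isUnit (isUnit_nonsing_inv_iff.mpr hC)
  exact PosDef.posSemidef_add hZ hQC

lemma Matrix.inv_mul_mul_transpose_s6 {α : Type*} [CommRing α] (C Q : Matrix m m α) :
    (C * Q * Cᵀ)⁻¹ = C⁻¹ᵀ * Q⁻¹ * C⁻¹ := by
  rw [mul_inv_rev, mul_inv_rev, ← transpose_nonsing_inv, Matrix.mul_assoc]

lemma Matrix.inv_add_mul_mul_mul_transpose_mul_transpose {H : Matrix n n ℝ}
    {Q C : Matrix m m ℝ} (Z : Matrix n m ℝ) (hH : H.PosDef) (hQ : Q.PosDef) (hC : IsUnit C) :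
    (H + Z * C * Q * Cᵀ * Zᵀ)⁻¹ =
      H⁻¹ - H⁻¹ * Z * (Zᵀ * H⁻¹ * Z + C⁻¹ᵀ * Q⁻¹ * C⁻¹)⁻¹ * Zᵀ * H⁻¹ := by
  have hCQC : IsUnit (C * Q * Cᵀ) := (hC.mul hQ.isUnit).mul ((isUnit_transpose C).mpr hC)
  have hG := (posDef_transpose_mul_inv_mul_add Z hH hQ hC).isUnit
  rw [← inv_mul_mul_transpose_s6, add_comm] at hG
  rw [← inv_mul_mul_transpose_s6, add_comm (Zᵀ * H⁻¹ * Z)]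
  simpa only [Matrix.mul_assoc] using
    add_mul_mul_inv_eq_sub H Z (C * Q * Cᵀ) Zᵀ hH.isUnit hCQC hG

/-- The Schur complement F = Jᵀ H⁻¹ J − (Jᵀ H⁻¹ Z) G⁻¹ (Zᵀ H⁻¹ J) equals
Jᵀ Ω⁻¹ J; consequently F is invertible with F⁻¹ = (Jᵀ Ω⁻¹ J)⁻¹ whenever
Jᵀ Ω⁻¹ J is invertible. -/
theorem schur_complement_eq_JT_omega_inv_J
    (n m k : ℕ)
    (H : Matrix (Fin n) (Fin n) ℝ) (Q : Matrix (Fin m) (Fin m) ℝ)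
    (C : Matrix (Fin m) (Fin m) ℝ) (Z : Matrix (Fin n) (Fin m) ℝ)
    (J : Matrix (Fin n) (Fin k) ℝ)
    (hH : H.PosDef) (hQ : Q.PosDef) (hC : IsUnit C)
    (Ω : Matrix (Fin n) (Fin n) ℝ) (hΩ : Ω = H + Z * C * Q * Cᵀ * Zᵀ)
    (G : Matrix (Fin m) (Fin m) ℝ) (hG : G = Zᵀ * H⁻¹ * Z + C⁻¹ᵀ * Q⁻¹ * C⁻¹)
    (F : Matrix (Fin k) (Fin k) ℝ)
    (hF : F = Jᵀ * H⁻¹ * J - (Jᵀ * H⁻¹ * Z) * G⁻¹ * (Zᵀ * H⁻¹ * J)) :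
    F = Jᵀ * Ω⁻¹ * J ∧
      (IsUnit (Jᵀ * Ω⁻¹ * J) → IsUnit F ∧ F⁻¹ = (Jᵀ * Ω⁻¹ * J)⁻¹) := by
  have hFΩ : F = Jᵀ * Ω⁻¹ * J := by
    rw [hF, hΩ, inv_add_mul_mul_mul_transpose_mul_transpose Z hH hQ hC, ← hG]
    simp only [Matrix.mul_sub, Matrix.sub_mul, Matrix.mul_assoc]
  exact ⟨hFΩ, fun hu => ⟨hFΩ ▸ hu, by rw [hFΩ]⟩⟩
end

section
/- With B = Jᵀ H⁻¹ Z and F = Jᵀ H⁻¹ J − B G⁻¹ (Zᵀ H⁻¹ J) assumed invertible, the following identity holds: F⁻¹ B G⁻¹ C⁻ᵀ Q⁻¹ = (Jᵀ Ω⁻¹ J)⁻¹ Jᵀ Ω⁻¹ Z C (appendix claim 2 in the proof of Proposition 2). -/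
open Matrix

/-!
With `M = C Q Cᵀ` one has `Ω = H + Z M Zᵀ` and `G = M⁻¹ + Zᵀ H⁻¹ Z`, the capacitance matrix of the
Woodbury identity, which is invertible because it is positive definite. Woodbury gives
`Ω⁻¹ = H⁻¹ - H⁻¹ Z G⁻¹ Zᵀ H⁻¹`, hence `F = Jᵀ Ω⁻¹ J`; the push-through identity
`Ω H⁻¹ Z = Z M G` gives `H⁻¹ Z G⁻¹ = Ω⁻¹ Z M`, and `M C⁻ᵀ Q⁻¹ = C`.
-/

namespace Matrix

variable {n m : Type*} [Fintype n] [Fintype m]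

section TrivialStar

variable {R : Type*} [CommRing R] [PartialOrder R] [StarRing R] [TrivialStar R]

theorem PosSemidef.transpose_mul_mul_same {A : Matrix n n R} (hA : A.PosSemidef)
    (B : Matrix n m R) : (Bᵀ * A * B).PosSemidef := by
  simpa only [conjTranspose_eq_transpose_of_trivial] using hA.conjTranspose_mul_mul_same B

theorem PosDef.mul_mul_transpose_same {A : Matrix n n R} (hA : A.PosDef) {B : Matrix m n R}
    (hB : Function.Injective B.vecMul) : (B * A * Bᵀ).PosDef := by
  simpa only [conjTranspose_eq_transpose_of_trivial] using hA.mul_mul_conjTranspose_same hB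

end TrivialStar

section Woodbury

variable [DecidableEq n] [DecidableEq m] {α : Type*} [CommRing α]

theorem add_mul_mul_inv_mul_mul_eq {A : Matrix n n α} {U : Matrix n m α} {M : Matrix m m α}
    {V : Matrix m n α} (hA : IsUnit A) (hM : IsUnit M) (hG : IsUnit (M⁻¹ + V * A⁻¹ * U)) :
    (A + U * M * V)⁻¹ * U * M = A⁻¹ * U * (M⁻¹ + V * A⁻¹ * U)⁻¹ := by
  obtain ⟨_⟩ := hA.nonempty_invertible
  obtain ⟨_⟩ := hM.nonempty_invertible
  obtain ⟨_⟩ := hG.nonempty_invertible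
  have : Invertible (⅟M + V * ⅟A * U) := by simpa only [invOf_eq_nonsing_inv]
  let := invertibleAddMulMul A U M V
  have push : U * M * (M⁻¹ + V * A⁻¹ * U) = (A + U * M * V) * (A⁻¹ * U) := by
    simp only [Matrix.add_mul, Matrix.mul_add, Matrix.mul_assoc, mul_inv_of_invertible,
      mul_inv_cancel_left_of_invertible, Matrix.mul_one, add_comm]
  calc (A + U * M * V)⁻¹ * U * M
      = (A + U * M * V)⁻¹ * (U * M * (M⁻¹ + V * A⁻¹ * U)) * (M⁻¹ + V * A⁻¹ * U)⁻¹ := by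
        rw [Matrix.mul_assoc _ (U * M * _), Matrix.mul_assoc (U * M), mul_inv_of_invertible,
          Matrix.mul_one, Matrix.mul_assoc]
    _ = A⁻¹ * U * (M⁻¹ + V * A⁻¹ * U)⁻¹ := by
        rw [push, inv_mul_cancel_left_of_invertible, Matrix.mul_assoc]

end Woodbury

end Matrix

theorem appendix_claim_2_general
    (n m k : ℕ)
    (H : Matrix (Fin n) (Fin n) ℝ) (Q : Matrix (Fin m) (Fin m) ℝ)
    (C : Matrix (Fin m) (Fin m) ℝ) (Z : Matrix (Fin n) (Fin m) ℝ)
    (J : Matrix (Fin n) (Fin k) ℝ)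
    (hH : H.PosDef) (hQ : Q.PosDef) (hC : IsUnit C)
    (Ω : Matrix (Fin n) (Fin n) ℝ) (hΩ : Ω = H + Z * C * Q * Cᵀ * Zᵀ)
    (G : Matrix (Fin m) (Fin m) ℝ) (hG : G = Zᵀ * H⁻¹ * Z + C⁻¹ᵀ * Q⁻¹ * C⁻¹)
    (B : Matrix (Fin k) (Fin m) ℝ) (hB : B = Jᵀ * H⁻¹ * Z)
    (F : Matrix (Fin k) (Fin k) ℝ)
    (hF : F = Jᵀ * H⁻¹ * J - B * G⁻¹ * (Zᵀ * H⁻¹ * J)) :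
    F⁻¹ * B * G⁻¹ * C⁻¹ᵀ * Q⁻¹ = (Jᵀ * Ω⁻¹ * J)⁻¹ * Jᵀ * Ω⁻¹ * Z * C := by
  set M := C * Q * Cᵀ
  have hM : M.PosDef := hQ.mul_mul_transpose_same (vecMul_injective_iff_isUnit.2 hC)
  have hΩM : Ω = H + Z * M * Zᵀ := by rw [hΩ]; simp only [M, Matrix.mul_assoc]
  have hGM : G = M⁻¹ + Zᵀ * H⁻¹ * Z := by
    rw [hG, add_comm]; simp only [M, Matrix.mul_inv_rev, transpose_nonsing_inv, Matrix.mul_assoc]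
  have hGu : IsUnit (M⁻¹ + Zᵀ * H⁻¹ * Z) :=
    (hM.inv.add_posSemidef (hH.inv.posSemidef.transpose_mul_mul_same Z)).isUnit
  have hFΩ : F = Jᵀ * Ω⁻¹ * J := by
    rw [hF, hB, hΩM, add_mul_mul_inv_eq_sub _ _ _ _ hH.isUnit hM.isUnit hGu, ← hGM]
    simp only [Matrix.mul_sub, Matrix.sub_mul, Matrix.mul_assoc]
  have hpush : H⁻¹ * Z * G⁻¹ = Ω⁻¹ * Z * M := by
    rw [hΩM, hGM, add_mul_mul_inv_mul_mul_eq hH.isUnit hM.isUnit hGu]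
  calc F⁻¹ * B * G⁻¹ * C⁻¹ᵀ * Q⁻¹
      = (Jᵀ * Ω⁻¹ * J)⁻¹ * Jᵀ * (H⁻¹ * Z * G⁻¹) * C⁻¹ᵀ * Q⁻¹ := by
        rw [hFΩ, hB]; simp only [Matrix.mul_assoc]
    _ = (Jᵀ * Ω⁻¹ * J)⁻¹ * Jᵀ * Ω⁻¹ * Z * C * (Q * (C⁻¹ * C)ᵀ * Q⁻¹) := by
        rw [hpush]; simp only [M, transpose_mul, Matrix.mul_assoc]
    _ = (Jᵀ * Ω⁻¹ * J)⁻¹ * Jᵀ * Ω⁻¹ * Z * C := by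
        rw [nonsing_inv_mul _ ((isUnit_iff_isUnit_det C).1 hC), transpose_one, Matrix.mul_one,
          mul_nonsing_inv _ ((isUnit_iff_isUnit_det Q).1 hQ.isUnit), Matrix.mul_one]

/-- Appendix claim 2 in the proof of Proposition 2:
F⁻¹ B G⁻¹ C⁻ᵀ Q⁻¹ = (Jᵀ Ω⁻¹ J)⁻¹ Jᵀ Ω⁻¹ Z C. -/
theorem appendix_claim_2
    (n m k : ℕ)
    (H : Matrix (Fin n) (Fin n) ℝ) (Q : Matrix (Fin m) (Fin m) ℝ)
    (C : Matrix (Fin m) (Fin m) ℝ) (Z : Matrix (Fin n) (Fin m) ℝ)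
    (J : Matrix (Fin n) (Fin k) ℝ)
    (hH : H.PosDef) (hQ : Q.PosDef) (hC : IsUnit C)
    (Ω : Matrix (Fin n) (Fin n) ℝ) (hΩ : Ω = H + Z * C * Q * Cᵀ * Zᵀ)
    (G : Matrix (Fin m) (Fin m) ℝ) (hG : G = Zᵀ * H⁻¹ * Z + C⁻¹ᵀ * Q⁻¹ * C⁻¹)
    (hJ : IsUnit (Jᵀ * Ω⁻¹ * J))
    (B : Matrix (Fin k) (Fin m) ℝ) (hB : B = Jᵀ * H⁻¹ * Z)
    (F : Matrix (Fin k) (Fin k) ℝ)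
    (hF : F = Jᵀ * H⁻¹ * J - B * G⁻¹ * (Zᵀ * H⁻¹ * J))
    (hFu : IsUnit F) :
    F⁻¹ * B * G⁻¹ * C⁻¹ᵀ * Q⁻¹ = (Jᵀ * Ω⁻¹ * J)⁻¹ * Jᵀ * Ω⁻¹ * Z * C :=
  appendix_claim_2_general n m k H Q C Z J hH hQ hC Ω hΩ G hG B hB F hF
end

section
/- With B = Jᵀ H⁻¹ Z, E = Zᵀ H⁻¹ J, and F = Jᵀ H⁻¹ J − B G⁻¹ E assumed invertible, the following identity holds: −G⁻¹ E F⁻¹ Jᵀ H⁻¹ + (G⁻¹ + G⁻¹ E F⁻¹ B G⁻¹) Zᵀ H⁻¹ = C Q Cᵀ Zᵀ Ω⁻¹ (I − J (Jᵀ Ω⁻¹ J)⁻¹ Jᵀ Ω⁻¹), where I is the n×n identity matrix (appendix claim 3 in the proof of Proposition 2). -/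
/-!
Write `P = C Q Cᵀ`, so that `Ω = H + Z P Zᵀ` and `G = P⁻¹ + Zᵀ H⁻¹ Z` is the capacitance matrix of
this low-rank update; `G` is positive definite, hence invertible. The Woodbury identity gives
`Ω⁻¹ = H⁻¹ - H⁻¹ Z G⁻¹ Zᵀ H⁻¹`, and the push-through identity gives `P Zᵀ Ω⁻¹ = G⁻¹ Zᵀ H⁻¹`.
The first shows `Jᵀ Ω⁻¹ J = F`; substituting all three, both sides of the claim become the same
noncommutative polynomial in `H⁻¹`, `G⁻¹` and `F⁻¹`.
-/

open Matrix

namespace Matrix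

variable {n m α : Type*} [Fintype n] [DecidableEq n] [Fintype m] [DecidableEq m] [CommRing α]

theorem mul_mul_add_mul_mul_inv (A : Matrix n n α) (U : Matrix n m α) (P : Matrix m m α)
    (V : Matrix m n α) (hA : IsUnit A) (hP : IsUnit P) (hS : IsUnit (P⁻¹ + V * A⁻¹ * U)) :
    P * V * (A + U * P * V)⁻¹ = (P⁻¹ + V * A⁻¹ * U)⁻¹ * V * A⁻¹ := by
  rw [add_mul_mul_inv_eq_sub A U P V hA hP hS]
  set S := P⁻¹ + V * A⁻¹ * U
  have hVU : V * A⁻¹ * U = S - P⁻¹ := by simp [S]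
  have hPP : P * P⁻¹ = 1 := mul_nonsing_inv P (P.isUnit_iff_isUnit_det.mp hP)
  have hSS : S * S⁻¹ = 1 := mul_nonsing_inv S (S.isUnit_iff_isUnit_det.mp hS)
  -- `V A⁻¹ U = S - P⁻¹` turns the Woodbury correction term into `P V A⁻¹ - S⁻¹ V A⁻¹`.
  calc P * V * (A⁻¹ - A⁻¹ * U * S⁻¹ * V * A⁻¹)
      = P * V * A⁻¹ - P * (V * A⁻¹ * U) * S⁻¹ * (V * A⁻¹) := by
        simp only [Matrix.mul_sub, Matrix.mul_assoc]
    _ = P * V * A⁻¹ - (P * (S * S⁻¹) * V * A⁻¹ - P * P⁻¹ * S⁻¹ * V * A⁻¹) := by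
        rw [hVU]; simp only [Matrix.mul_sub, Matrix.sub_mul, Matrix.mul_assoc]
    _ = S⁻¹ * V * A⁻¹ := by
        rw [hSS, hPP]; simp only [Matrix.mul_one, Matrix.one_mul, Matrix.mul_assoc]; abel

end Matrix

theorem appendix_claim_3_general
    (n m k : ℕ)
    (H : Matrix (Fin n) (Fin n) ℝ) (Q : Matrix (Fin m) (Fin m) ℝ)
    (C : Matrix (Fin m) (Fin m) ℝ) (Z : Matrix (Fin n) (Fin m) ℝ)
    (J : Matrix (Fin n) (Fin k) ℝ)
    (hH : H.PosDef) (hQ : Q.PosDef) (hC : IsUnit C)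
    (Ω : Matrix (Fin n) (Fin n) ℝ) (hΩ : Ω = H + Z * C * Q * Cᵀ * Zᵀ)
    (G : Matrix (Fin m) (Fin m) ℝ) (hG : G = Zᵀ * H⁻¹ * Z + C⁻¹ᵀ * Q⁻¹ * C⁻¹)
    (B : Matrix (Fin k) (Fin m) ℝ) (hB : B = Jᵀ * H⁻¹ * Z)
    (E : Matrix (Fin m) (Fin k) ℝ) (hE : E = Zᵀ * H⁻¹ * J)
    (F : Matrix (Fin k) (Fin k) ℝ)
    (hF : F = Jᵀ * H⁻¹ * J - B * G⁻¹ * E) :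
    -(G⁻¹ * E * F⁻¹ * Jᵀ * H⁻¹) + (G⁻¹ + G⁻¹ * E * F⁻¹ * B * G⁻¹) * Zᵀ * H⁻¹
      = C * Q * Cᵀ * Zᵀ * Ω⁻¹ * (1 - J * (Jᵀ * Ω⁻¹ * J)⁻¹ * Jᵀ * Ω⁻¹) := by
  set P := C * Q * Cᵀ
  have hP : IsUnit P := (hC.mul hQ.isUnit).mul ((isUnit_transpose C).mpr hC)
  have hGP : G = P⁻¹ + Zᵀ * H⁻¹ * Z := by
    rw [hG, add_comm, transpose_nonsing_inv]
    simp only [P, Matrix.mul_inv_rev, Matrix.mul_assoc]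
  have hG_unit : IsUnit G := by
    have hZHZ : (Zᵀ * H⁻¹ * Z).PosSemidef := by
      simpa only [conjTranspose_eq_transpose_of_trivial] using
        hH.inv.posSemidef.conjTranspose_mul_mul_same Z
    have hCQC : (C⁻¹ᵀ * Q⁻¹ * C⁻¹).PosDef := by
      simpa only [conjTranspose_eq_transpose_of_trivial] using
        hQ.inv.conjTranspose_mul_mul_same
          (mulVec_injective_of_isUnit (isUnit_nonsing_inv_iff.mpr hC))
    exact (hG ▸ PosDef.posSemidef_add hZHZ hCQC).isUnit
  have hΩP : Ω = H + Z * P * Zᵀ := by simp only [hΩ, P, Matrix.mul_assoc]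
  have hΩinv : Ω⁻¹ = H⁻¹ - H⁻¹ * Z * G⁻¹ * Zᵀ * H⁻¹ := by
    rw [hΩP, hGP]; exact add_mul_mul_inv_eq_sub H Z P Zᵀ hH.isUnit hP (hGP ▸ hG_unit)
  have hPZΩ : P * Zᵀ * Ω⁻¹ = G⁻¹ * Zᵀ * H⁻¹ := by
    rw [hΩP, hGP]; exact mul_mul_add_mul_mul_inv H Z P Zᵀ hH.isUnit hP (hGP ▸ hG_unit)
  have hJΩJ : Jᵀ * Ω⁻¹ * J = F := by
    rw [hΩinv, hF, hB, hE]; simp only [Matrix.mul_sub, Matrix.sub_mul, Matrix.mul_assoc]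
  rw [hJΩJ, Matrix.mul_sub, Matrix.mul_one, hPZΩ, hΩinv, hB, hE]
  simp only [Matrix.mul_sub, Matrix.add_mul, Matrix.mul_assoc]
  abel

/-- Appendix claim 3 in the proof of Proposition 2:
−G⁻¹ E F⁻¹ Jᵀ H⁻¹ + (G⁻¹ + G⁻¹ E F⁻¹ B G⁻¹) Zᵀ H⁻¹
  = C Q Cᵀ Zᵀ Ω⁻¹ (I − J (Jᵀ Ω⁻¹ J)⁻¹ Jᵀ Ω⁻¹). -/
theorem appendix_claim_3
    (n m k : ℕ)
    (H : Matrix (Fin n) (Fin n) ℝ) (Q : Matrix (Fin m) (Fin m) ℝ)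
    (C : Matrix (Fin m) (Fin m) ℝ) (Z : Matrix (Fin n) (Fin m) ℝ)
    (J : Matrix (Fin n) (Fin k) ℝ)
    (hH : H.PosDef) (hQ : Q.PosDef) (hC : IsUnit C)
    (Ω : Matrix (Fin n) (Fin n) ℝ) (hΩ : Ω = H + Z * C * Q * Cᵀ * Zᵀ)
    (G : Matrix (Fin m) (Fin m) ℝ) (hG : G = Zᵀ * H⁻¹ * Z + C⁻¹ᵀ * Q⁻¹ * C⁻¹)
    (hJ : IsUnit (Jᵀ * Ω⁻¹ * J))
    (B : Matrix (Fin k) (Fin m) ℝ) (hB : B = Jᵀ * H⁻¹ * Z)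
    (E : Matrix (Fin m) (Fin k) ℝ) (hE : E = Zᵀ * H⁻¹ * J)
    (F : Matrix (Fin k) (Fin k) ℝ)
    (hF : F = Jᵀ * H⁻¹ * J - B * G⁻¹ * E)
    (hFu : IsUnit F) :
    -(G⁻¹ * E * F⁻¹ * Jᵀ * H⁻¹) + (G⁻¹ + G⁻¹ * E * F⁻¹ * B * G⁻¹) * Zᵀ * H⁻¹
      = C * Q * Cᵀ * Zᵀ * Ω⁻¹ * (1 - J * (Jᵀ * Ω⁻¹ * J)⁻¹ * Jᵀ * Ω⁻¹) :=
  appendix_claim_3_general n m k H Q C Z J hH hQ hC Ω hΩ G hG B hB E hE F hF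
end

section
/- With B = Jᵀ H⁻¹ Z, E = Zᵀ H⁻¹ J, and F = Jᵀ H⁻¹ J − B G⁻¹ E assumed invertible, the following identity holds: (G⁻¹ + G⁻¹ E F⁻¹ B G⁻¹) C⁻ᵀ Q⁻¹ = (I − C Q Cᵀ Zᵀ Ω⁻¹ Z + C Q Cᵀ Zᵀ Ω⁻¹ J (Jᵀ Ω⁻¹ J)⁻¹ Jᵀ Ω⁻¹ Z) C, where I is the m×m identity matrix (appendix claim 4 in the proof of Proposition 2). -/
/-!
Put `W = C Q Cᵀ`, so that `Ω = H + Z W Zᵀ` and `G = W⁻¹ + Zᵀ H⁻¹ Z`. The Woodbury identity gives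
`Ω⁻¹ = H⁻¹ - H⁻¹ Z G⁻¹ Zᵀ H⁻¹`, hence `Jᵀ Ω⁻¹ J = F`, together with the push-through identities
`W Zᵀ Ω⁻¹ = G⁻¹ Zᵀ H⁻¹` and `Ω⁻¹ Z = H⁻¹ Z G⁻¹ W⁻¹`. Since also `1 - G⁻¹ Zᵀ H⁻¹ Z = G⁻¹ W⁻¹`,
the right-hand side becomes `(G⁻¹ + G⁻¹ E F⁻¹ B G⁻¹) W⁻¹ C`, and `W⁻¹ C = C⁻ᵀ Q⁻¹`.
-/

open Matrix

namespace Matrix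

variable {α : Type*} [CommRing α] {n m : Type*} [Fintype n] [DecidableEq n] [Fintype m]
  [DecidableEq m] {A : Matrix n n α} {U : Matrix n m α} {C : Matrix m m α} {V : Matrix m n α}

theorem mul_mul_add_mul_mul_inv_s10 (hA : IsUnit A) (hC : IsUnit C)
    (hT : IsUnit (C⁻¹ + V * A⁻¹ * U)) :
    C * V * (A + U * C * V)⁻¹ = (C⁻¹ + V * A⁻¹ * U)⁻¹ * V * A⁻¹ := by
  rw [add_mul_mul_inv_eq_sub _ _ _ _ hA hC hT]
  set T := C⁻¹ + V * A⁻¹ * U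
  have hVU : V * A⁻¹ * U = T - C⁻¹ := by simp [T]
  calc C * V * (A⁻¹ - A⁻¹ * U * T⁻¹ * V * A⁻¹)
      = C * V * A⁻¹ - C * (V * A⁻¹ * U) * T⁻¹ * V * A⁻¹ := by
        simp only [Matrix.mul_sub, Matrix.mul_assoc]
    _ = T⁻¹ * V * A⁻¹ := by
        rw [hVU, Matrix.mul_sub, Matrix.sub_mul, Matrix.sub_mul, Matrix.sub_mul,
          mul_nonsing_inv _ ((isUnit_iff_isUnit_det _).1 hC), Matrix.mul_assoc C T,
          mul_nonsing_inv _ ((isUnit_iff_isUnit_det _).1 hT), Matrix.mul_one,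
          Matrix.one_mul, sub_sub_cancel]

theorem add_mul_mul_inv_mul (hA : IsUnit A) (hC : IsUnit C)
    (hT : IsUnit (C⁻¹ + V * A⁻¹ * U)) :
    (A + U * C * V)⁻¹ * U = A⁻¹ * U * (C⁻¹ + V * A⁻¹ * U)⁻¹ * C⁻¹ := by
  rw [add_mul_mul_inv_eq_sub _ _ _ _ hA hC hT]
  set T := C⁻¹ + V * A⁻¹ * U
  have hVU : V * A⁻¹ * U = T - C⁻¹ := by simp [T]
  calc (A⁻¹ - A⁻¹ * U * T⁻¹ * V * A⁻¹) * U
      = A⁻¹ * U - A⁻¹ * U * T⁻¹ * (V * A⁻¹ * U) := by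
        simp only [Matrix.sub_mul, Matrix.mul_assoc]
    _ = A⁻¹ * U * T⁻¹ * C⁻¹ := by
        rw [hVU, Matrix.mul_sub, Matrix.mul_assoc _ T⁻¹ T,
          nonsing_inv_mul _ ((isUnit_iff_isUnit_det _).1 hT), Matrix.mul_one, sub_sub_cancel]

theorem PosDef.inv_add_transpose_mul_inv_mul {H : Matrix n n ℝ} {W : Matrix m m ℝ}
    (hH : H.PosDef) (hW : W.PosDef) (Z : Matrix n m ℝ) : (W⁻¹ + Zᵀ * H⁻¹ * Z).PosDef :=
  hW.inv.add_posSemidef (hH.inv.posSemidef.conjTranspose_mul_mul_same Z)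

end Matrix

theorem appendix_claim_4_general
    (n m k : ℕ)
    (H : Matrix (Fin n) (Fin n) ℝ) (Q : Matrix (Fin m) (Fin m) ℝ)
    (C : Matrix (Fin m) (Fin m) ℝ) (Z : Matrix (Fin n) (Fin m) ℝ)
    (J : Matrix (Fin n) (Fin k) ℝ)
    (hH : H.PosDef) (hQ : Q.PosDef) (hC : IsUnit C)
    (Ω : Matrix (Fin n) (Fin n) ℝ) (hΩ : Ω = H + Z * C * Q * Cᵀ * Zᵀ)
    (G : Matrix (Fin m) (Fin m) ℝ) (hG : G = Zᵀ * H⁻¹ * Z + C⁻¹ᵀ * Q⁻¹ * C⁻¹)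
    (B : Matrix (Fin k) (Fin m) ℝ) (hB : B = Jᵀ * H⁻¹ * Z)
    (E : Matrix (Fin m) (Fin k) ℝ) (hE : E = Zᵀ * H⁻¹ * J)
    (F : Matrix (Fin k) (Fin k) ℝ)
    (hF : F = Jᵀ * H⁻¹ * J - B * G⁻¹ * E) :
    (G⁻¹ + G⁻¹ * E * F⁻¹ * B * G⁻¹) * C⁻¹ᵀ * Q⁻¹
      = (1 - C * Q * Cᵀ * Zᵀ * Ω⁻¹ * Z
          + C * Q * Cᵀ * Zᵀ * Ω⁻¹ * J * (Jᵀ * Ω⁻¹ * J)⁻¹ * Jᵀ * Ω⁻¹ * Z) * C := by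
  set W := C * Q * Cᵀ
  have hW : W.PosDef := (IsUnit.posDef_star_right_conjugate_iff hC).2 hQ
  have hWinv : W⁻¹ = C⁻¹ᵀ * Q⁻¹ * C⁻¹ := by
    rw [Matrix.mul_inv_rev, Matrix.mul_inv_rev, transpose_nonsing_inv, Matrix.mul_assoc]
  have hGW : G = W⁻¹ + Zᵀ * H⁻¹ * Z := by rw [hG, hWinv, add_comm]
  have hT : IsUnit (W⁻¹ + Zᵀ * H⁻¹ * Z) := (hH.inv_add_transpose_mul_inv_mul hW Z).isUnit
  have hΩW : Ω = H + Z * W * Zᵀ := by simp only [hΩ, W, Matrix.mul_assoc]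
  have hJΩJ : Jᵀ * Ω⁻¹ * J = F := by
    rw [hΩW, add_mul_mul_inv_eq_sub _ _ _ _ hH.isUnit hW.isUnit hT, ← hGW, hF, hB, hE]
    simp only [Matrix.sub_mul, Matrix.mul_sub, Matrix.mul_assoc]
  have hWZΩ : W * Zᵀ * Ω⁻¹ = G⁻¹ * Zᵀ * H⁻¹ := by
    rw [hΩW, mul_mul_add_mul_mul_inv_s10 hH.isUnit hW.isUnit hT, ← hGW]
  have hΩZ : Ω⁻¹ * Z = H⁻¹ * Z * G⁻¹ * W⁻¹ := by
    rw [hΩW, add_mul_mul_inv_mul hH.isUnit hW.isUnit hT, ← hGW]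
  have hGZ : 1 - G⁻¹ * (Zᵀ * H⁻¹ * Z) = G⁻¹ * W⁻¹ := by
    rw [eq_sub_of_add_eq hGW.symm, Matrix.mul_sub,
      nonsing_inv_mul _ ((isUnit_iff_isUnit_det _).1 (hGW ▸ hT))]
  calc (G⁻¹ + G⁻¹ * E * F⁻¹ * B * G⁻¹) * C⁻¹ᵀ * Q⁻¹
      = (G⁻¹ * W⁻¹ + G⁻¹ * E * F⁻¹ * B * G⁻¹ * W⁻¹) * C := by
        simp only [hWinv, Matrix.add_mul, Matrix.mul_assoc,
          nonsing_inv_mul _ ((isUnit_iff_isUnit_det _).1 hC), Matrix.mul_one]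
    _ = (1 - G⁻¹ * (Zᵀ * H⁻¹ * Z) + G⁻¹ * E * F⁻¹ * Jᵀ * (Ω⁻¹ * Z)) * C := by
        rw [hGZ, hΩZ, hB]
        simp only [Matrix.mul_assoc]
    _ = _ := by
        rw [hJΩJ, hWZΩ, hE]
        simp only [Matrix.mul_assoc]

/-- Appendix claim 4 in the proof of Proposition 2:
(G⁻¹ + G⁻¹ E F⁻¹ B G⁻¹) C⁻ᵀ Q⁻¹
  = (I − C Q Cᵀ Zᵀ Ω⁻¹ Z + C Q Cᵀ Zᵀ Ω⁻¹ J (Jᵀ Ω⁻¹ J)⁻¹ Jᵀ Ω⁻¹ Z) C. -/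
theorem appendix_claim_4
    (n m k : ℕ)
    (H : Matrix (Fin n) (Fin n) ℝ) (Q : Matrix (Fin m) (Fin m) ℝ)
    (C : Matrix (Fin m) (Fin m) ℝ) (Z : Matrix (Fin n) (Fin m) ℝ)
    (J : Matrix (Fin n) (Fin k) ℝ)
    (hH : H.PosDef) (hQ : Q.PosDef) (hC : IsUnit C)
    (Ω : Matrix (Fin n) (Fin n) ℝ) (hΩ : Ω = H + Z * C * Q * Cᵀ * Zᵀ)
    (G : Matrix (Fin m) (Fin m) ℝ) (hG : G = Zᵀ * H⁻¹ * Z + C⁻¹ᵀ * Q⁻¹ * C⁻¹)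
    (hJ : IsUnit (Jᵀ * Ω⁻¹ * J))
    (B : Matrix (Fin k) (Fin m) ℝ) (hB : B = Jᵀ * H⁻¹ * Z)
    (E : Matrix (Fin m) (Fin k) ℝ) (hE : E = Zᵀ * H⁻¹ * J)
    (F : Matrix (Fin k) (Fin k) ℝ)
    (hF : F = Jᵀ * H⁻¹ * J - B * G⁻¹ * E)
    (hFu : IsUnit F) :
    (G⁻¹ + G⁻¹ * E * F⁻¹ * B * G⁻¹) * C⁻¹ᵀ * Q⁻¹
      = (1 - C * Q * Cᵀ * Zᵀ * Ω⁻¹ * Z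
          + C * Q * Cᵀ * Zᵀ * Ω⁻¹ * J * (Jᵀ * Ω⁻¹ * J)⁻¹ * Jᵀ * Ω⁻¹ * Z) * C :=
  appendix_claim_4_general n m k H Q C Z J hH hQ hC Ω hΩ G hG B hB E hE F hF
end

section
/- Let Y ∈ ℝⁿ, b₀ ∈ ℝᵐ, and suppose v̂ ∈ ℝᵏ and β̂ ∈ ℝᵐ solve the GLS normal equations of the augmented model: (Jᵀ H⁻¹ J) v̂ + (Jᵀ H⁻¹ Z) β̂ = Jᵀ H⁻¹ Y and (Zᵀ H⁻¹ J) v̂ + G β̂ = Zᵀ H⁻¹ Y + C⁻ᵀ Q⁻¹ b₀. Then v̂ = (Jᵀ Ω⁻¹ J)⁻¹ Jᵀ Ω⁻¹ (Y − Z C b₀); that is, the GLS estimate of the time-invariant intercept vector equals the conditional maximum likelihood estimate (Proposition 2). -/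
/-!
Eliminate the random effect through the weighted residual `e = A⁻¹ (Y - J v - U β)` of the
augmented normal equations: the first equation says `Jᵀ e = 0`, the second `Uᵀ e = P (β - b)`.
Since `M P = 1`, this gives `(A + U M Uᵀ) e = Y - U b - J v`, so `e = Ω⁻¹ (Y - U b - J v)`, and
`Jᵀ e = 0` becomes the conditional GLS equation for `v`. The theorem is the case `A = H`,
`M = C Q Cᵀ`, `P = C⁻ᵀ Q⁻¹ C⁻¹`, `b = C b₀`.
-/

open Matrix

section

variable {R : Type*} [CommRing R] {n m k : Type*} [Fintype n] [DecidableEq n] [Fintype m]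
  [DecidableEq m] [Fintype k]

theorem mulVec_eq_of_augmented_normal_equations
    {A : Matrix n n R} {M P : Matrix m m R} {U : Matrix n m R} {J : Matrix n k R}
    {Y : n → R} {b β : m → R} {v : k → R}
    (hA : IsUnit A) (hMP : M * P = 1) (hΩ : IsUnit (A + U * M * Uᵀ))
    (h1 : (Jᵀ * A⁻¹ * J) *ᵥ v + (Jᵀ * A⁻¹ * U) *ᵥ β = (Jᵀ * A⁻¹) *ᵥ Y)
    (h2 : (Uᵀ * A⁻¹ * J) *ᵥ v + (Uᵀ * A⁻¹ * U + P) *ᵥ β = (Uᵀ * A⁻¹) *ᵥ Y + P *ᵥ b) :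
    (Jᵀ * (A + U * M * Uᵀ)⁻¹ * J) *ᵥ v = (Jᵀ * (A + U * M * Uᵀ)⁻¹) *ᵥ (Y - U *ᵥ b) := by
  obtain ⟨_⟩ := hA.nonempty_invertible
  obtain ⟨_⟩ := hΩ.nonempty_invertible
  set e := A⁻¹ *ᵥ (Y - J *ᵥ v - U *ᵥ β)
  have hJe : Jᵀ *ᵥ e = 0 := by
    simp only [e, mulVec_sub, mulVec_mulVec, ← Matrix.mul_assoc]
    linear_combination -h1
  have hUe : Uᵀ *ᵥ e = P *ᵥ (β - b) := by
    rw [add_mulVec] at h2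
    simp only [e, mulVec_sub, mulVec_mulVec, ← Matrix.mul_assoc]
    linear_combination -h2
  have hAe : A *ᵥ e = Y - J *ᵥ v - U *ᵥ β := by
    simp only [e, mulVec_mulVec, mul_inv_of_invertible, one_mulVec]
  have hΩe : (A + U * M * Uᵀ) *ᵥ e = Y - U *ᵥ b - J *ᵥ v := by
    rw [add_mulVec, hAe, ← mulVec_mulVec, hUe, ← mulVec_mulVec, mulVec_mulVec _ M, hMP,
      one_mulVec, mulVec_sub]
    abel
  rw [← inv_mulVec_eq_vec hΩe.symm, mulVec_mulVec, mulVec_sub, mulVec_mulVec, sub_eq_zero] at hJe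
  exact hJe.symm

end

/-- Proposition 2: the GLS estimate of the time-invariant intercept vector
obtained from the normal equations of the augmented model equals the
conditional maximum likelihood estimate. -/
theorem gls_intercept_is_mle
    (n m k : ℕ)
    (H : Matrix (Fin n) (Fin n) ℝ) (Q : Matrix (Fin m) (Fin m) ℝ)
    (C : Matrix (Fin m) (Fin m) ℝ) (Z : Matrix (Fin n) (Fin m) ℝ)
    (J : Matrix (Fin n) (Fin k) ℝ)
    (hH : H.PosDef) (hQ : Q.PosDef) (hC : IsUnit C)
    (Ω : Matrix (Fin n) (Fin n) ℝ) (hΩ : Ω = H + Z * C * Q * Cᵀ * Zᵀ)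
    (G : Matrix (Fin m) (Fin m) ℝ) (hG : G = Zᵀ * H⁻¹ * Z + C⁻¹ᵀ * Q⁻¹ * C⁻¹)
    (hJ : IsUnit (Jᵀ * Ω⁻¹ * J))
    (Y : Fin n → ℝ) (b₀ : Fin m → ℝ) (v : Fin k → ℝ) (β : Fin m → ℝ)
    (h1 : (Jᵀ * H⁻¹ * J) *ᵥ v + (Jᵀ * H⁻¹ * Z) *ᵥ β = (Jᵀ * H⁻¹) *ᵥ Y)
    (h2 : (Zᵀ * H⁻¹ * J) *ᵥ v + G *ᵥ β
            = (Zᵀ * H⁻¹) *ᵥ Y + (C⁻¹ᵀ * Q⁻¹) *ᵥ b₀) :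
    v = ((Jᵀ * Ω⁻¹ * J)⁻¹ * Jᵀ * Ω⁻¹) *ᵥ (Y - (Z * C) *ᵥ b₀) := by
  obtain ⟨_⟩ := hC.nonempty_invertible
  obtain ⟨_⟩ := hQ.isUnit.nonempty_invertible
  have hΩ' : Ω = H + Z * (C * Q * Cᵀ) * Zᵀ := by simp only [hΩ, Matrix.mul_assoc]
  have hΩpd : Ω.PosDef := by
    rw [hΩ']
    simpa only [conjTranspose_eq_transpose_of_trivial] using
      hH.add_posSemidef ((hQ.posSemidef.mul_mul_conjTranspose_same C).mul_mul_conjTranspose_same Z)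
  have hMP : C * Q * Cᵀ * (C⁻¹ᵀ * Q⁻¹ * C⁻¹) = 1 := by
    simp [transpose_nonsing_inv, Matrix.mul_assoc]
  have hPb : (C⁻¹ᵀ * Q⁻¹ * C⁻¹) *ᵥ (C *ᵥ b₀) = (C⁻¹ᵀ * Q⁻¹) *ᵥ b₀ := by
    simp [mulVec_mulVec, Matrix.mul_assoc]
  have key := mulVec_eq_of_augmented_normal_equations hH.isUnit hMP (hΩ' ▸ hΩpd.isUnit) h1
    (by rwa [← hG, hPb])
  rw [← hΩ', mulVec_mulVec] at key
  obtain ⟨_⟩ := hJ.nonempty_invertible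
  rw [← inv_mulVec_eq_vec key.symm, mulVec_mulVec, Matrix.mul_assoc _ Jᵀ]
end

section
/- Let Y ∈ ℝⁿ, b₀ ∈ ℝᵐ, and suppose v̂ ∈ ℝᵏ and β̂ ∈ ℝᵐ solve the GLS normal equations of the augmented model: (Jᵀ H⁻¹ J) v̂ + (Jᵀ H⁻¹ Z) β̂ = Jᵀ H⁻¹ Y and (Zᵀ H⁻¹ J) v̂ + G β̂ = Zᵀ H⁻¹ Y + C⁻ᵀ Q⁻¹ b₀. Then β̂ = C b₀ + C Q Cᵀ Zᵀ Ω⁻¹ (Y − J v̂ − Z C b₀); that is, the GLS estimate of the stacked time-varying coefficient vector equals the Kalman-smoothed estimate of the model with time-invariant intercepts (Proposition 3). -/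
/-!
With `S = C Q Cᵀ` one has `C⁻ᵀ Q⁻¹ C⁻¹ = S⁻¹`, so the second normal equation reads
`G β = Zᵀ H⁻¹ (Y - J v) + S⁻¹ (C b₀)` with `G = Zᵀ H⁻¹ Z + S⁻¹` positive definite. The
push-through identity `G S Zᵀ = Zᵀ H⁻¹ Ω` gives `G (S Zᵀ Ω⁻¹) = Zᵀ H⁻¹`, so applying `G` to the
Kalman update `C b₀ + S Zᵀ Ω⁻¹ (Y - J v - Z C b₀)` reproduces that right-hand side.
-/

open Matrix

namespace Matrix

section Woodbury

variable {m n α : Type*} [Fintype m] [Fintype n] [DecidableEq m] [DecidableEq n] [CommRing α]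
  {A : Matrix n n α} {S : Matrix m m α} (U : Matrix n m α) (V : Matrix m n α)

theorem woodbury_push_through (hA : IsUnit A) (hS : IsUnit S) :
    (V * A⁻¹ * U + S⁻¹) * (S * V) = V * A⁻¹ * (A + U * S * V) := by
  simp only [Matrix.add_mul, Matrix.mul_add, Matrix.mul_assoc, nonsing_inv_mul_cancel_left _ _
    ((isUnit_iff_isUnit_det S).mp hS), nonsing_inv_mul _ ((isUnit_iff_isUnit_det A).mp hA),
    Matrix.mul_one]
  abel

theorem woodbury_push_through_inv (hA : IsUnit A) (hS : IsUnit S)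
    (hΩ : IsUnit (A + U * S * V)) :
    (V * A⁻¹ * U + S⁻¹) * (S * V * (A + U * S * V)⁻¹) = V * A⁻¹ := by
  rw [← Matrix.mul_assoc, woodbury_push_through U V hA hS, Matrix.mul_assoc,
    mul_nonsing_inv _ ((isUnit_iff_isUnit_det _).mp hΩ), Matrix.mul_one]

/-- The information-form and gain-form posterior means of a linear Gaussian update agree. -/
theorem eq_add_mulVec_sub_of_mulVec_eq (hA : IsUnit A) (hS : IsUnit S)
    (hΩ : IsUnit (A + U * S * V)) (hG : IsUnit (V * A⁻¹ * U + S⁻¹))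
    {β x₀ : m → α} {r : n → α}
    (h : (V * A⁻¹ * U + S⁻¹) *ᵥ β = (V * A⁻¹) *ᵥ r + S⁻¹ *ᵥ x₀) :
    β = x₀ + (S * V * (A + U * S * V)⁻¹) *ᵥ (r - U *ᵥ x₀) := by
  apply mulVec_injective_of_isUnit hG
  rw [h, mulVec_add, mulVec_mulVec, woodbury_push_through_inv U V hA hS hΩ, mulVec_sub,
    mulVec_mulVec, add_mulVec]
  abel

end Woodbury

namespace PosDef

variable {m n K : Type*} [Fintype m] [Fintype n]
  [Field K] [PartialOrder K] [StarRing K] [TrivialStar K]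
  {H : Matrix n n K} {S : Matrix m m K}

theorem mul_mul_transpose_of_isUnit_s12 [DecidableEq m] (hS : S.PosDef) {C : Matrix m m K}
    (hC : IsUnit C) : (C * S * Cᵀ).PosDef := by
  simpa [star_eq_conjTranspose, conjTranspose_eq_transpose_of_trivial] using
    (IsUnit.posDef_star_right_conjugate_iff hC).mpr hS

theorem add_mul_mul_transpose_s12 [AddLeftMono K] (hH : H.PosDef) (hS : S.PosDef)
    (Z : Matrix n m K) : (H + Z * S * Zᵀ).PosDef := by
  simpa [conjTranspose_eq_transpose_of_trivial] using
    hH.add_posSemidef (hS.posSemidef.mul_mul_conjTranspose_same Z)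

theorem transpose_mul_inv_mul_add_inv [DecidableEq m] [DecidableEq n] [AddLeftMono K]
    (hH : H.PosDef) (hS : S.PosDef) (Z : Matrix n m K) : (Zᵀ * H⁻¹ * Z + S⁻¹).PosDef := by
  simpa [conjTranspose_eq_transpose_of_trivial] using
    hS.inv.posSemidef_add (hH.inv.posSemidef.conjTranspose_mul_mul_same Z)

end PosDef

end Matrix

theorem gls_coefficients_equal_kalman_smoother_with_intercepts_general
    (n m k : ℕ)
    (H : Matrix (Fin n) (Fin n) ℝ) (Q : Matrix (Fin m) (Fin m) ℝ)
    (C : Matrix (Fin m) (Fin m) ℝ) (Z : Matrix (Fin n) (Fin m) ℝ)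
    (J : Matrix (Fin n) (Fin k) ℝ)
    (hH : H.PosDef) (hQ : Q.PosDef) (hC : IsUnit C)
    (Ω : Matrix (Fin n) (Fin n) ℝ) (hΩ : Ω = H + Z * C * Q * Cᵀ * Zᵀ)
    (G : Matrix (Fin m) (Fin m) ℝ) (hG : G = Zᵀ * H⁻¹ * Z + C⁻¹ᵀ * Q⁻¹ * C⁻¹)
    (Y : Fin n → ℝ) (b₀ : Fin m → ℝ) (v : Fin k → ℝ) (β : Fin m → ℝ)
    (h2 : (Zᵀ * H⁻¹ * J) *ᵥ v + G *ᵥ β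
            = (Zᵀ * H⁻¹) *ᵥ Y + (C⁻¹ᵀ * Q⁻¹) *ᵥ b₀) :
    β = C *ᵥ b₀ + (C * Q * Cᵀ * Zᵀ * Ω⁻¹) *ᵥ (Y - J *ᵥ v - (Z * C) *ᵥ b₀) := by
  set S := C * Q * Cᵀ
  have hS : S.PosDef := hQ.mul_mul_transpose_of_isUnit_s12 hC
  have hSinv : C⁻¹ᵀ * Q⁻¹ * C⁻¹ = S⁻¹ := by
    rw [Matrix.mul_inv_rev, Matrix.mul_inv_rev, transpose_nonsing_inv, Matrix.mul_assoc]
  replace hΩ : Ω = H + Z * S * Zᵀ := by simp only [hΩ, S, Matrix.mul_assoc]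
  replace hG : G = Zᵀ * H⁻¹ * Z + S⁻¹ := by rw [hG, hSinv]
  have hnormal : G *ᵥ β = (Zᵀ * H⁻¹) *ᵥ (Y - J *ᵥ v) + S⁻¹ *ᵥ (C *ᵥ b₀) := by
    rw [mulVec_mulVec, ← hSinv, Matrix.mul_assoc, nonsing_inv_mul _
      ((isUnit_iff_isUnit_det C).mp hC), Matrix.mul_one, mulVec_sub, mulVec_mulVec,
      sub_add_eq_add_sub, eq_sub_iff_add_eq', h2]
  subst hΩ hG
  have hsolve := eq_add_mulVec_sub_of_mulVec_eq Z Zᵀ hH.isUnit hS.isUnit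
    (hH.add_mul_mul_transpose_s12 hS Z).isUnit (hH.transpose_mul_inv_mul_add_inv hS Z).isUnit hnormal
  rwa [mulVec_mulVec] at hsolve

/-- Proposition 3: the GLS estimate of the stacked time-varying coefficient
vector equals the Kalman-smoothed estimate of the model with time-invariant
intercepts. -/
theorem gls_coefficients_equal_kalman_smoother_with_intercepts
    (n m k : ℕ)
    (H : Matrix (Fin n) (Fin n) ℝ) (Q : Matrix (Fin m) (Fin m) ℝ)
    (C : Matrix (Fin m) (Fin m) ℝ) (Z : Matrix (Fin n) (Fin m) ℝ)
    (J : Matrix (Fin n) (Fin k) ℝ)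
    (hH : H.PosDef) (hQ : Q.PosDef) (hC : IsUnit C)
    (Ω : Matrix (Fin n) (Fin n) ℝ) (hΩ : Ω = H + Z * C * Q * Cᵀ * Zᵀ)
    (G : Matrix (Fin m) (Fin m) ℝ) (hG : G = Zᵀ * H⁻¹ * Z + C⁻¹ᵀ * Q⁻¹ * C⁻¹)
    (hJ : IsUnit (Jᵀ * Ω⁻¹ * J))
    (Y : Fin n → ℝ) (b₀ : Fin m → ℝ) (v : Fin k → ℝ) (β : Fin m → ℝ)
    (h1 : (Jᵀ * H⁻¹ * J) *ᵥ v + (Jᵀ * H⁻¹ * Z) *ᵥ β = (Jᵀ * H⁻¹) *ᵥ Y)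
    (h2 : (Zᵀ * H⁻¹ * J) *ᵥ v + G *ᵥ β
            = (Zᵀ * H⁻¹) *ᵥ Y + (C⁻¹ᵀ * Q⁻¹) *ᵥ b₀) :
    β = C *ᵥ b₀ + (C * Q * Cᵀ * Zᵀ * Ω⁻¹) *ᵥ (Y - J *ᵥ v - (Z * C) *ᵥ b₀) :=
  gls_coefficients_equal_kalman_smoother_with_intercepts_general n m k H Q C Z J hH hQ hC Ω hΩ G hG
    Y b₀ v β h2
end

section
/- With B = Jᵀ H⁻¹ Z, E = Zᵀ H⁻¹ J, and F = Jᵀ H⁻¹ J − B G⁻¹ E assumed invertible, the variance of the GLS estimate of the stacked coefficient vector (the lower-right block of the inverse of the block normal matrix) satisfies G⁻¹ + G⁻¹ E F⁻¹ B G⁻¹ = C Q Cᵀ − C Q Cᵀ Zᵀ Ω⁻¹ Z C Q Cᵀ + C Q Cᵀ Zᵀ Ω⁻¹ J (Jᵀ Ω⁻¹ J)⁻¹ Jᵀ Ω⁻¹ Z C Q Cᵀ; i.e., the GLS variance equals the Kalman-smoother mean squared error plus the extra term due to estimating the intercepts (Proposition 4). -/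
/-!
Put `P = C Q Cᵀ`, so that `Ω = H + Z P Zᵀ` and `G = P⁻¹ + Zᵀ H⁻¹ Z` is the capacitance matrix of
this update. Woodbury's identity, read in both directions, gives `G⁻¹ = P - P Zᵀ Ω⁻¹ Z P` and
`Ω⁻¹ = H⁻¹ - H⁻¹ Z G⁻¹ Zᵀ H⁻¹`; the latter says that the Schur complement `F` is `Jᵀ Ω⁻¹ J`.
The push-through identities `G⁻¹ Zᵀ H⁻¹ = P Zᵀ Ω⁻¹` and `H⁻¹ Z G⁻¹ = Ω⁻¹ Z P` then turn
`G⁻¹ E F⁻¹ B G⁻¹` into the intercept term. All of this is algebra over a commutative ring once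
`H`, `P`, `Ω` and `G` are invertible, which positive definiteness guarantees.
-/

open Matrix

namespace Matrix

variable {ι κ μ R : Type*} [Fintype ι] [DecidableEq ι] [Fintype κ] [DecidableEq κ] [CommRing R]

noncomputable def capacitance (A : Matrix ι ι R) (U : Matrix ι κ R) (P : Matrix κ κ R)
    (V : Matrix κ ι R) : Matrix κ κ R :=
  P⁻¹ + V * A⁻¹ * U

variable {A : Matrix ι ι R} {P : Matrix κ κ R} (U : Matrix ι κ R) (V : Matrix κ ι R)

theorem capacitance_inv_mul_mul_inv (hA : IsUnit A) (hP : IsUnit P)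
    (hΩ : IsUnit (A + U * P * V)) (hG : IsUnit (capacitance A U P V)) :
    (capacitance A U P V)⁻¹ * V * A⁻¹ = P * V * (A + U * P * V)⁻¹ := by
  obtain ⟨_⟩ := hA.nonempty_invertible
  obtain ⟨_⟩ := hP.nonempty_invertible
  have key : V * A⁻¹ * (A + U * P * V) = capacitance A U P V * (P * V) := by
    simp only [capacitance, Matrix.mul_add, Matrix.add_mul, Matrix.mul_assoc,
      inv_mul_cancel_left_of_invertible, inv_mul_of_invertible, Matrix.mul_one]
  set Ω := A + U * P * V
  set G := capacitance A U P V
  obtain ⟨_⟩ := hΩ.nonempty_invertible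
  obtain ⟨_⟩ := hG.nonempty_invertible
  calc G⁻¹ * V * A⁻¹ = G⁻¹ * (V * A⁻¹ * Ω) * Ω⁻¹ := by
        simp only [Matrix.mul_assoc, mul_inv_of_invertible, Matrix.mul_one]
    _ = P * V * Ω⁻¹ := by rw [key, ← Matrix.mul_assoc, inv_mul_of_invertible, Matrix.one_mul]

theorem inv_mul_mul_capacitance_inv (hA : IsUnit A) (hP : IsUnit P)
    (hΩ : IsUnit (A + U * P * V)) (hG : IsUnit (capacitance A U P V)) :
    A⁻¹ * U * (capacitance A U P V)⁻¹ = (A + U * P * V)⁻¹ * U * P := by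
  obtain ⟨_⟩ := hA.nonempty_invertible
  obtain ⟨_⟩ := hP.nonempty_invertible
  have key : (A + U * P * V) * (A⁻¹ * U) = U * P * capacitance A U P V := by
    simp only [capacitance, Matrix.mul_add, Matrix.add_mul, Matrix.mul_assoc,
      mul_inv_cancel_left_of_invertible, mul_inv_of_invertible, Matrix.mul_one]
  set Ω := A + U * P * V
  set G := capacitance A U P V
  obtain ⟨_⟩ := hΩ.nonempty_invertible
  obtain ⟨_⟩ := hG.nonempty_invertible
  calc A⁻¹ * U * G⁻¹ = Ω⁻¹ * (Ω * (A⁻¹ * U)) * G⁻¹ := by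
        rw [inv_mul_cancel_left_of_invertible]
    _ = Ω⁻¹ * U * P := by
        simp only [key, Matrix.mul_assoc, mul_inv_of_invertible, Matrix.mul_one]

theorem capacitance_inv_eq_sub (hA : IsUnit A) (hP : IsUnit P) (hΩ : IsUnit (A + U * P * V)) :
    (capacitance A U P V)⁻¹ = P - P * V * (A + U * P * V)⁻¹ * U * P := by
  have h := add_mul_mul_inv_eq_sub P⁻¹ V A⁻¹ U (isUnit_nonsing_inv_iff.mpr hP)
    (isUnit_nonsing_inv_iff.mpr hA)
  simp only [nonsing_inv_nonsing_inv _ ((isUnit_iff_isUnit_det _).mp hA),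
    nonsing_inv_nonsing_inv _ ((isUnit_iff_isUnit_det _).mp hP)] at h
  exact h hΩ

theorem mul_add_mul_mul_inv_mul_eq_sub (hA : IsUnit A) (hP : IsUnit P)
    (hG : IsUnit (capacitance A U P V)) (L : Matrix μ ι R) (J : Matrix ι μ R) :
    L * (A + U * P * V)⁻¹ * J
      = L * A⁻¹ * J - L * A⁻¹ * U * (capacitance A U P V)⁻¹ * (V * A⁻¹ * J) := by
  rw [add_mul_mul_inv_eq_sub A U P V hA hP hG]
  simp only [capacitance, Matrix.mul_sub, Matrix.sub_mul, Matrix.mul_assoc]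

theorem capacitance_inv_add_schur_eq [Fintype μ] [DecidableEq μ] (hA : IsUnit A)
    (hP : IsUnit P) (hΩ : IsUnit (A + U * P * V)) (hG : IsUnit (capacitance A U P V))
    (L : Matrix μ ι R) (J : Matrix ι μ R) :
    (capacitance A U P V)⁻¹ + (capacitance A U P V)⁻¹ * (V * A⁻¹ * J)
        * (L * A⁻¹ * J - L * A⁻¹ * U * (capacitance A U P V)⁻¹ * (V * A⁻¹ * J))⁻¹
        * (L * A⁻¹ * U) * (capacitance A U P V)⁻¹
      = P - P * V * (A + U * P * V)⁻¹ * U * P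
        + P * V * (A + U * P * V)⁻¹ * J * (L * (A + U * P * V)⁻¹ * J)⁻¹
          * L * (A + U * P * V)⁻¹ * U * P := by
  rw [← mul_add_mul_mul_inv_mul_eq_sub U V hA hP hG]
  set X := (L * (A + U * P * V)⁻¹ * J)⁻¹
  calc _ = (capacitance A U P V)⁻¹ + (capacitance A U P V)⁻¹ * V * A⁻¹ * J * X * L
        * (A⁻¹ * U * (capacitance A U P V)⁻¹) := by simp only [Matrix.mul_assoc]
    _ = _ := by
      rw [capacitance_inv_mul_mul_inv U V hA hP hΩ hG,
        inv_mul_mul_capacitance_inv U V hA hP hΩ hG, capacitance_inv_eq_sub U V hA hP hΩ]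
      simp only [Matrix.mul_assoc]

end Matrix

theorem gls_variance_eq_kalman_mse_plus_intercept_term_general
    (n m k : ℕ)
    (H : Matrix (Fin n) (Fin n) ℝ) (Q : Matrix (Fin m) (Fin m) ℝ)
    (C : Matrix (Fin m) (Fin m) ℝ) (Z : Matrix (Fin n) (Fin m) ℝ)
    (J : Matrix (Fin n) (Fin k) ℝ)
    (hH : H.PosDef) (hQ : Q.PosDef) (hC : IsUnit C)
    (Ω : Matrix (Fin n) (Fin n) ℝ) (hΩ : Ω = H + Z * C * Q * Cᵀ * Zᵀ)
    (G : Matrix (Fin m) (Fin m) ℝ) (hG : G = Zᵀ * H⁻¹ * Z + C⁻¹ᵀ * Q⁻¹ * C⁻¹)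
    (B : Matrix (Fin k) (Fin m) ℝ) (hB : B = Jᵀ * H⁻¹ * Z)
    (E : Matrix (Fin m) (Fin k) ℝ) (hE : E = Zᵀ * H⁻¹ * J)
    (F : Matrix (Fin k) (Fin k) ℝ)
    (hF : F = Jᵀ * H⁻¹ * J - B * G⁻¹ * E) :
    G⁻¹ + G⁻¹ * E * F⁻¹ * B * G⁻¹
      = C * Q * Cᵀ - C * Q * Cᵀ * Zᵀ * Ω⁻¹ * Z * C * Q * Cᵀ
        + C * Q * Cᵀ * Zᵀ * Ω⁻¹ * J * (Jᵀ * Ω⁻¹ * J)⁻¹ * Jᵀ * Ω⁻¹ * Z * C * Q * Cᵀ := by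
  have hP : (C * Q * Cᵀ).PosDef := by
    simpa only [conjTranspose_eq_transpose_of_trivial] using
      hQ.mul_mul_conjTranspose_same (vecMul_injective_iff_isUnit.mpr hC)
  have hΩ' : Ω = H + Z * (C * Q * Cᵀ) * Zᵀ := by simp only [hΩ, Matrix.mul_assoc]
  have hG' : G = capacitance H Z (C * Q * Cᵀ) Zᵀ := by
    rw [hG, capacitance, add_comm, Matrix.mul_inv_rev, Matrix.mul_inv_rev,
      transpose_nonsing_inv, Matrix.mul_assoc]
  have hΩpd : Ω.PosDef := by
    rw [hΩ']
    simpa only [conjTranspose_eq_transpose_of_trivial] using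
      hH.add_posSemidef (hP.posSemidef.mul_mul_conjTranspose_same Z)
  have hGpd : G.PosDef := by
    rw [hG', capacitance]
    simpa only [conjTranspose_eq_transpose_of_trivial] using
      hP.inv.add_posSemidef (hH.inv.posSemidef.conjTranspose_mul_mul_same Z)
  have hschur := capacitance_inv_add_schur_eq Z Zᵀ hH.isUnit hP.isUnit (hΩ' ▸ hΩpd.isUnit)
    (hG' ▸ hGpd.isUnit) Jᵀ J
  rw [← hΩ', ← hG'] at hschur
  subst hF hB hE
  simpa only [Matrix.mul_assoc] using hschur

/-- Proposition 4: the variance of the GLS estimate of the stacked coefficient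
vector equals the Kalman-smoother mean squared error plus the extra term due
to estimating the intercepts. -/
theorem gls_variance_eq_kalman_mse_plus_intercept_term
    (n m k : ℕ)
    (H : Matrix (Fin n) (Fin n) ℝ) (Q : Matrix (Fin m) (Fin m) ℝ)
    (C : Matrix (Fin m) (Fin m) ℝ) (Z : Matrix (Fin n) (Fin m) ℝ)
    (J : Matrix (Fin n) (Fin k) ℝ)
    (hH : H.PosDef) (hQ : Q.PosDef) (hC : IsUnit C)
    (Ω : Matrix (Fin n) (Fin n) ℝ) (hΩ : Ω = H + Z * C * Q * Cᵀ * Zᵀ)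
    (G : Matrix (Fin m) (Fin m) ℝ) (hG : G = Zᵀ * H⁻¹ * Z + C⁻¹ᵀ * Q⁻¹ * C⁻¹)
    (hJ : IsUnit (Jᵀ * Ω⁻¹ * J))
    (B : Matrix (Fin k) (Fin m) ℝ) (hB : B = Jᵀ * H⁻¹ * Z)
    (E : Matrix (Fin m) (Fin k) ℝ) (hE : E = Zᵀ * H⁻¹ * J)
    (F : Matrix (Fin k) (Fin k) ℝ)
    (hF : F = Jᵀ * H⁻¹ * J - B * G⁻¹ * E)
    (hFu : IsUnit F) :
    G⁻¹ + G⁻¹ * E * F⁻¹ * B * G⁻¹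
      = C * Q * Cᵀ - C * Q * Cᵀ * Zᵀ * Ω⁻¹ * Z * C * Q * Cᵀ
        + C * Q * Cᵀ * Zᵀ * Ω⁻¹ * J * (Jᵀ * Ω⁻¹ * J)⁻¹ * Jᵀ * Ω⁻¹ * Z * C * Q * Cᵀ :=
  gls_variance_eq_kalman_mse_plus_intercept_term_general n m k H Q C Z J hH hQ hC Ω hΩ G hG B hB E
    hE F hF
end

section
/- With B = Jᵀ H⁻¹ Z, E = Zᵀ H⁻¹ J, and F = Jᵀ H⁻¹ J − B G⁻¹ E assumed invertible, the off-diagonal (covariance) block of the inverse of the block normal matrix satisfies G⁻¹ E F⁻¹ = C Q Cᵀ Zᵀ Ω⁻¹ J (Jᵀ Ω⁻¹ J)⁻¹. -/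
/-!
By Woodbury, `Ω⁻¹ = H⁻¹ - H⁻¹ Z G⁻¹ Zᵀ H⁻¹`, where `G = S⁻¹ + Zᵀ H⁻¹ Z` with `S = C Q Cᵀ`.
Sandwiching this between `Jᵀ` and `J` shows `Jᵀ Ω⁻¹ J = F`, and the push-through identity
`S Zᵀ Ω⁻¹ = G⁻¹ Zᵀ H⁻¹` turns the right-hand side into `G⁻¹ E F⁻¹`.
-/

open Matrix

namespace Matrix

variable {n m R : Type*} [Fintype n] [Fintype m] [DecidableEq n] [DecidableEq m] [CommRing R]

theorem mul_mul_add_mul_mul_inv_eq {A : Matrix n n R} {U : Matrix n m R} {S : Matrix m m R}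
    {V : Matrix m n R} (hA : IsUnit A) (hS : IsUnit S) (hG : IsUnit (S⁻¹ + V * A⁻¹ * U)) :
    S * V * (A + U * S * V)⁻¹ = (S⁻¹ + V * A⁻¹ * U)⁻¹ * V * A⁻¹ := by
  set G := S⁻¹ + V * A⁻¹ * U with hGdef
  have hSG : S * (1 - V * A⁻¹ * U * G⁻¹) = G⁻¹ :=
    calc S * (1 - V * A⁻¹ * U * G⁻¹) = S * ((G - V * A⁻¹ * U) * G⁻¹) := by
          rw [sub_mul, mul_nonsing_inv _ ((isUnit_iff_isUnit_det G).mp hG)]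
      _ = G⁻¹ := by
          rw [hGdef, add_sub_cancel_right, ← Matrix.mul_assoc,
            mul_nonsing_inv _ ((isUnit_iff_isUnit_det S).mp hS), Matrix.one_mul]
  calc S * V * (A + U * S * V)⁻¹ = S * V * (A⁻¹ - A⁻¹ * U * G⁻¹ * V * A⁻¹) :=
        by rw [add_mul_mul_inv_eq_sub _ _ _ _ hA hS hG]
    _ = S * (1 - V * A⁻¹ * U * G⁻¹) * V * A⁻¹ := by
        simp only [Matrix.mul_sub, Matrix.sub_mul, Matrix.mul_one, Matrix.mul_assoc]
    _ = G⁻¹ * V * A⁻¹ := by rw [hSG]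

end Matrix

theorem covariance_block_identity_left_general
    (n m k : ℕ)
    (H : Matrix (Fin n) (Fin n) ℝ) (Q : Matrix (Fin m) (Fin m) ℝ)
    (C : Matrix (Fin m) (Fin m) ℝ) (Z : Matrix (Fin n) (Fin m) ℝ)
    (J : Matrix (Fin n) (Fin k) ℝ)
    (hH : H.PosDef) (hQ : Q.PosDef) (hC : IsUnit C)
    (Ω : Matrix (Fin n) (Fin n) ℝ) (hΩ : Ω = H + Z * C * Q * Cᵀ * Zᵀ)
    (G : Matrix (Fin m) (Fin m) ℝ) (hG : G = Zᵀ * H⁻¹ * Z + C⁻¹ᵀ * Q⁻¹ * C⁻¹)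
    (B : Matrix (Fin k) (Fin m) ℝ) (hB : B = Jᵀ * H⁻¹ * Z)
    (E : Matrix (Fin m) (Fin k) ℝ) (hE : E = Zᵀ * H⁻¹ * J)
    (F : Matrix (Fin k) (Fin k) ℝ)
    (hF : F = Jᵀ * H⁻¹ * J - B * G⁻¹ * E) :
    G⁻¹ * E * F⁻¹ = C * Q * Cᵀ * Zᵀ * Ω⁻¹ * J * (Jᵀ * Ω⁻¹ * J)⁻¹ := by
  set S := C * Q * Cᵀ with hS
  have hSpd : S.PosDef := by
    simpa using hQ.mul_mul_conjTranspose_same (vecMul_injective_iff_isUnit.mpr hC)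
  have hΩS : Ω = H + Z * S * Zᵀ := by rw [hΩ, hS]; simp only [Matrix.mul_assoc]
  have hGS : G = S⁻¹ + Zᵀ * H⁻¹ * Z := by
    rw [hG, hS, Matrix.mul_inv_rev, Matrix.mul_inv_rev, transpose_nonsing_inv, add_comm]
    simp only [Matrix.mul_assoc]
  have hGu : IsUnit (S⁻¹ + Zᵀ * H⁻¹ * Z) :=
    (hSpd.inv.add_posSemidef (by simpa using hH.inv.posSemidef.conjTranspose_mul_mul_same Z)).isUnit
  have hΩinv : Ω⁻¹ = H⁻¹ - H⁻¹ * Z * G⁻¹ * Zᵀ * H⁻¹ := by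
    rw [hΩS, add_mul_mul_inv_eq_sub _ _ _ _ hH.isUnit hSpd.isUnit hGu, hGS]
  have hpush : S * Zᵀ * Ω⁻¹ = G⁻¹ * Zᵀ * H⁻¹ := by
    rw [hΩS, hGS]; exact mul_mul_add_mul_mul_inv_eq hH.isUnit hSpd.isUnit hGu
  have hJΩJ : Jᵀ * Ω⁻¹ * J = F := by
    rw [hΩinv, hF, hB, hE]; simp only [Matrix.mul_sub, Matrix.sub_mul, Matrix.mul_assoc]
  rw [hJΩJ, hE]
  simp only [← Matrix.mul_assoc]
  rw [← hpush]

/-- The off-diagonal (covariance) block of the inverse of the block normal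
matrix: G⁻¹ E F⁻¹ = C Q Cᵀ Zᵀ Ω⁻¹ J (Jᵀ Ω⁻¹ J)⁻¹. -/
theorem covariance_block_identity_left
    (n m k : ℕ)
    (H : Matrix (Fin n) (Fin n) ℝ) (Q : Matrix (Fin m) (Fin m) ℝ)
    (C : Matrix (Fin m) (Fin m) ℝ) (Z : Matrix (Fin n) (Fin m) ℝ)
    (J : Matrix (Fin n) (Fin k) ℝ)
    (hH : H.PosDef) (hQ : Q.PosDef) (hC : IsUnit C)
    (Ω : Matrix (Fin n) (Fin n) ℝ) (hΩ : Ω = H + Z * C * Q * Cᵀ * Zᵀ)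
    (G : Matrix (Fin m) (Fin m) ℝ) (hG : G = Zᵀ * H⁻¹ * Z + C⁻¹ᵀ * Q⁻¹ * C⁻¹)
    (hJ : IsUnit (Jᵀ * Ω⁻¹ * J))
    (B : Matrix (Fin k) (Fin m) ℝ) (hB : B = Jᵀ * H⁻¹ * Z)
    (E : Matrix (Fin m) (Fin k) ℝ) (hE : E = Zᵀ * H⁻¹ * J)
    (F : Matrix (Fin k) (Fin k) ℝ)
    (hF : F = Jᵀ * H⁻¹ * J - B * G⁻¹ * E)
    (hFu : IsUnit F) :
    G⁻¹ * E * F⁻¹ = C * Q * Cᵀ * Zᵀ * Ω⁻¹ * J * (Jᵀ * Ω⁻¹ * J)⁻¹ :=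
  covariance_block_identity_left_general n m k H Q C Z J hH hQ hC Ω hΩ G hG B hB E hE F hF
end

section
/- The difference between the GLS-based variance and the Kalman-smoother mean squared error, namely the m×m matrix C Q Cᵀ Zᵀ Ω⁻¹ J (Jᵀ Ω⁻¹ J)⁻¹ Jᵀ Ω⁻¹ Z C Q Cᵀ, is symmetric positive semidefinite; hence the GLS variance dominates the Kalman-smoother MSE in the Loewner order. -/
/-!
Since `H` and `Q` are positive (semi)definite, so is `Ω`, hence so are `Ω⁻¹`, `Jᵀ Ω⁻¹ J` and its
inverse. By the symmetry of `Q` and `Ω⁻¹`, the matrix in question is the congruence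
`B (Jᵀ Ω⁻¹ J)⁻¹ Bᵀ` with `B = C Q Cᵀ Zᵀ Ω⁻¹ J`, hence positive semidefinite.
-/

open Matrix

namespace Matrix.PosSemidef

variable {m n k R : Type*} [Finite m] [Fintype n] [Fintype k] [DecidableEq k]
  [CommRing R] [PartialOrder R] [StarRing R]

-- `⁻¹` is `Matrix.nonsing_inv`, which is `0` on singular matrices, so it preserves
-- positive semidefiniteness unconditionally.
lemma mul_mul_inv_conjTranspose_mul_mul_conjTranspose {P : Matrix n n R} (hP : P.PosSemidef)
    (A : Matrix m n R) (J : Matrix n k R) :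
    (A * P * J * (Jᴴ * P * J)⁻¹ * Jᴴ * P * Aᴴ).PosSemidef := by
  have h := (hP.conjTranspose_mul_mul_same J).inv.mul_mul_conjTranspose_same (A * P * J)
  simpa only [conjTranspose_mul, hP.isHermitian.eq, Matrix.mul_assoc] using h

end Matrix.PosSemidef

theorem gls_variance_minus_kalman_mse_posSemidef_general
    (n m k : ℕ)
    (H : Matrix (Fin n) (Fin n) ℝ) (Q : Matrix (Fin m) (Fin m) ℝ)
    (C : Matrix (Fin m) (Fin m) ℝ) (Z : Matrix (Fin n) (Fin m) ℝ)
    (J : Matrix (Fin n) (Fin k) ℝ)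
    (hH : H.PosDef) (hQ : Q.PosDef)
    (Ω : Matrix (Fin n) (Fin n) ℝ) (hΩ : Ω = H + Z * C * Q * Cᵀ * Zᵀ) :
    (C * Q * Cᵀ * Zᵀ * Ω⁻¹ * J * (Jᵀ * Ω⁻¹ * J)⁻¹ * Jᵀ * Ω⁻¹ * Z * C * Q * Cᵀ).PosSemidef := by
  have hΩ_psd : Ω.PosSemidef := by
    have hZCQ := hQ.posSemidef.mul_mul_conjTranspose_same (Z * C)
    rw [conjTranspose_mul] at hZCQ
    simpa only [hΩ, conjTranspose_eq_transpose_of_trivial, Matrix.mul_assoc]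
      using hH.posSemidef.add hZCQ
  have h := hΩ_psd.inv.mul_mul_inv_conjTranspose_mul_mul_conjTranspose (C * Q * Cᵀ * Zᵀ) J
  have hQt : Qᵀ = Q := by rw [← conjTranspose_eq_transpose_of_trivial, hQ.isHermitian.eq]
  simpa only [conjTranspose_eq_transpose_of_trivial, transpose_mul, transpose_transpose,
    hQt, Matrix.mul_assoc] using h

/-- The difference between the GLS-based variance and the Kalman-smoother
mean squared error, C Q Cᵀ Zᵀ Ω⁻¹ J (Jᵀ Ω⁻¹ J)⁻¹ Jᵀ Ω⁻¹ Z C Q Cᵀ, is symmetric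
positive semidefinite; hence the GLS variance dominates the Kalman-smoother
MSE in the Loewner order. -/
theorem gls_variance_minus_kalman_mse_posSemidef
    (n m k : ℕ)
    (H : Matrix (Fin n) (Fin n) ℝ) (Q : Matrix (Fin m) (Fin m) ℝ)
    (C : Matrix (Fin m) (Fin m) ℝ) (Z : Matrix (Fin n) (Fin m) ℝ)
    (J : Matrix (Fin n) (Fin k) ℝ)
    (hH : H.PosDef) (hQ : Q.PosDef) (hC : IsUnit C)
    (Ω : Matrix (Fin n) (Fin n) ℝ) (hΩ : Ω = H + Z * C * Q * Cᵀ * Zᵀ)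
    (hJ : IsUnit (Jᵀ * Ω⁻¹ * J)) :
    (C * Q * Cᵀ * Zᵀ * Ω⁻¹ * J * (Jᵀ * Ω⁻¹ * J)⁻¹ * Jᵀ * Ω⁻¹ * Z * C * Q * Cᵀ).PosSemidef :=
  gls_variance_minus_kalman_mse_posSemidef_general n m k H Q C Z J hH hQ Ω hΩ
end
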